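/- Let f : ℝ → ℝ be nonnegative, nondecreasing, differentiable with f^m convex on an interval. Then for t in the interval and δ > 0 with t - 3δ in the interval and f(t-3δ) > 0, one has f(t) - f(t-3δ) ≤ 3·m·δ·f'(t). -/
import Mathlib

/-- If `f` is nonnegative, nondecreasing, differentiable with `f^m` convex on an interval,
then `f(t) - f(t-3δ) ≤ 3 m δ f'(t)` whenever `f(t-3δ) > 0`. -/
theorem diff_le_of_mconvex (f : ℝ → ℝ) (m : ℕ) (hm : 1 ≤ m) (I : Set ℝ) (hI : Convex ℝ I)
    (hf : ∀ x, 0 ≤ f x) (hmono : Monotone f) (hdiff : Differentiable ℝ f)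
    (hconv : ConvexOn ℝ I (fun x => f x ^ m))
    (t δ : ℝ) (ht : t ∈ I) (hδ : 0 < δ) (htδ : t - 3 * δ ∈ I)
    (hpos : 0 < f (t - 3 * δ)) :
    f t - f (t - 3 * δ) ≤ 3 * (m : ℝ) * δ * deriv f t := by
  set a := f t with ha
  set b := f (t - 3 * δ) with hb
  have hba : b ≤ a := hmono (by linarith)
  have hapos : 0 < a := lt_of_lt_of_le hpos hba
  have hlt : t - 3 * δ < t := by linarith
  -- derivative of f^m at t
  have hd : HasDerivAt (fun x => f x ^ m) ((m : ℝ) * a ^ (m - 1) * deriv f t) t :=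
    (hdiff t).hasDerivAt.pow m
  have hslope := hconv.slope_le_of_hasDerivAt htδ ht hlt hd
  rw [slope_def_field] at hslope
  have hden : t - (t - 3 * δ) = 3 * δ := by ring
  have key : a ^ m - b ^ m ≤ 3 * δ * ((m : ℝ) * a ^ (m - 1) * deriv f t) := by
    have h3 : (0:ℝ) < 3 * δ := by linarith
    have := (div_le_iff₀ h3).mp (by
      simpa [div_sub_div_same, hden] using hslope)
    linarith
  -- lower bound: (a - b) * a^(m-1) ≤ a^m - b^m
  have hlow : (a - b) * a ^ (m - 1) ≤ a ^ m - b ^ m := by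
    have hbm : b ^ m ≤ b * a ^ (m - 1) := by
      calc b ^ m = b * b ^ (m - 1) := by
            rw [← pow_succ']
            congr 1
            omega
        _ ≤ b * a ^ (m - 1) := by
            exact mul_le_mul_of_nonneg_left (pow_le_pow_left₀ (hf _) hba _) (le_of_lt hpos)
    have ham : a ^ m = a * a ^ (m - 1) := by
      rw [← pow_succ']
      congr 1
      omega
    nlinarith [pow_nonneg (hf (t - 3 * δ)) (m - 1)]
  have hcpos : 0 < a ^ (m - 1) := pow_pos hapos _
  have : (a - b) * a ^ (m - 1) ≤ (3 * (m : ℝ) * δ * deriv f t) * a ^ (m - 1) := by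
    calc (a - b) * a ^ (m - 1) ≤ a ^ m - b ^ m := hlow
      _ ≤ 3 * δ * ((m : ℝ) * a ^ (m - 1) * deriv f t) := key
      _ = (3 * (m : ℝ) * δ * deriv f t) * a ^ (m - 1) := by ring
  exact le_of_mul_le_mul_right this hcpos
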